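/- arXiv:2305.01792 — 2 statements merged into one kernel-verified Lean document; each statement's English description precedes it below -/
import Mathlib

section
/- Let θ ∈ (0, 1/2], let n ≥ 2 be an integer, and let v ∈ S_{T[θ,S_n]} with basis expansion v = Σ_i v_i e_i be such that v₁ = 0. If min( ‖v + y‖ , ‖v − y‖ ) ≤ θ · (⌊θ⁻¹⌋ + 1) for all y ∈ S_{T[θ,S_n]}, then v = ε e_m for some ε ∈ {−1, 1} and some integer m > 1. -/
open scoped BigOperators

noncomputable section

/-- Projection of a finitely supported vector onto the coordinates in `E`. -/
def tsProj (E : Finset ℕ+) (x : ℕ+ →₀ ℝ) : ℕ+ →₀ ℝ :=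
  x.filter fun i => i ∈ E

/-- The Schreier families `S_n` on the positive integers:
`S₁` consists of the sets `F` with `|F| ≤ min F` (together with `∅`), and `S_{n+1}`
consists of unions `F₁ ∪ ⋯ ∪ F_d` of nonempty members `F₁ < ⋯ < F_d` of `S_n`
with `d ≤ min F₁` (together with `∅`). -/
def Schreier : ℕ → Set (Finset ℕ+)
  | 0 => {F | F.card ≤ 1}
  | 1 => {F | ∀ a ∈ F, F.card ≤ (a : ℕ)}
  | n + 2 =>
      {F | F = ∅ ∨
        ∃ (d : ℕ) (G : Fin d → Finset ℕ+),
          0 < d ∧ (∀ i, G i ∈ Schreier (n + 1)) ∧ (∀ i, (G i).Nonempty) ∧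
          (∀ i j : Fin d, i < j → ∀ a ∈ G i, ∀ b ∈ G j, a < b) ∧
          (∀ i, ∀ a ∈ G i, d ≤ (a : ℕ)) ∧ F = Finset.univ.biUnion G}

/-- A tuple of nonempty finite sets `E 0 < E 1 < ⋯` whose set of minima belongs to `S`. -/
def TsAdmissible (S : Set (Finset ℕ+)) {d : ℕ} (E : Fin d → Finset ℕ+) : Prop :=
  (∀ i, (E i).Nonempty) ∧
  (∀ i j : Fin d, i < j → ∀ a ∈ E i, ∀ b ∈ E j, a < b) ∧
  ∃ μ : Fin d → ℕ+, (∀ i, IsLeast (↑(E i) : Set ℕ+) (μ i)) ∧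
    Finset.univ.image μ ∈ S

/-- The iterated norms `‖·‖_m` in the construction of the Tsirelson norm:
`‖x‖₀` is the supremum norm and
`‖x‖_{m+1} = max(‖x‖_m, sup{θ ∑ᵢ ‖Eᵢ x‖_m : E₁ < ⋯ < E_d, {min Eᵢ} ∈ S})`. -/
def tnormAux (θ : ℝ) (S : Set (Finset ℕ+)) : ℕ → (ℕ+ →₀ ℝ) → ℝ
  | 0, x => ⨆ i, |x i|
  | m + 1, x =>
      max (tnormAux θ S m x)
        (sSup {r : ℝ | ∃ (d : ℕ) (E : Fin d → Finset ℕ+), TsAdmissible S E ∧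
          r = θ * ∑ i, tnormAux θ S m (tsProj (E i) x)})

/-- The Tsirelson norm `‖x‖_{θ,S} = sup_m ‖x‖_m` on `c₀₀`. -/
def tnorm (θ : ℝ) (S : Set (Finset ℕ+)) (x : ℕ+ →₀ ℝ) : ℝ :=
  ⨆ m : ℕ, tnormAux θ S m x

/-- `X`, together with the sequence `e` of unit vectors, is (a realization of) the
Tsirelson space `T[θ, S_n]`: a Banach space containing `c₀₀` isometrically
(w.r.t. the Tsirelson norm) as a dense subspace, in which `(e i)` is a
(1-unconditional) basis, i.e. every `x` has a unique expansion `x = ∑ᵢ aᵢ eᵢ`. -/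
structure IsTsirelsonSpace (θ : ℝ) (n : ℕ) (X : Type*) [NormedAddCommGroup X]
    [NormedSpace ℝ X] (e : ℕ+ → X) : Prop where
  complete : CompleteSpace X
  norm_embed : ∀ a : ℕ+ →₀ ℝ, ‖a.sum fun i c => c • e i‖ = tnorm θ (Schreier n) a
  dense_embed : DenseRange fun a : ℕ+ →₀ ℝ => a.sum fun i c => c • e i
  expansion : ∀ x : X, ∃! a : ℕ+ → ℝ, HasSum (fun i => a i • e i) x


/-!
Suppose `v` had two nonzero coordinates and let `p ≥ 2` be the first one. Approximate `v` by a
finitely supported `b`. The estimate `‖b‖ ≤ max(|b_p|, θ|b_p| + ‖b - b_p e_p‖)` shows that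
`|b_p| + ‖b - b_p e_p‖` exceeds `1` by a fixed amount. With `N = ⌊θ⁻¹⌋`, the flat vector
`y = (θ(N+1))⁻¹ (e_{P+1} + ⋯ + e_{P+N+1})`, placed beyond the support of `b`, has norm `1`. Since
`p ≥ 2`, the minima `{p, p+1, P+1, …, P+N+1}` of the blocks `{p}, (p, P], {P+1}, …, {P+N+1}` form
a set in `S_2 ⊆ S_n`, so `‖b ± y‖ ≥ θ(|b_p| + ‖b - b_p e_p‖) + 1`, which stays above
`1 + θ ≥ θ(N+1)` even after the approximation error. Hence `v` has exactly one nonzero coordinate,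
which must be `±1` and cannot be the first.
-/

open Finset Filter Topology Function

lemma TsAdmissible.pairwise_disjoint {S : Set (Finset ℕ+)} {d : ℕ} {E : Fin d → Finset ℕ+}
    (hE : TsAdmissible S E) : Pairwise (Disjoint on E) := by
  intro i j hij
  rw [onFun, disjoint_left]
  intro a hai haj
  rcases hij.lt_or_gt with h | h
  · exact lt_irrefl a (hE.2.1 i j h a hai a haj)
  · exact lt_irrefl a (hE.2.1 j i h a haj a hai)

namespace Tsirelson

def l1Norm (x : ℕ+ →₀ ℝ) : ℝ := ∑ i ∈ x.support, |x i|

lemma l1Norm_nonneg (x : ℕ+ →₀ ℝ) : 0 ≤ l1Norm x :=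
  sum_nonneg fun _ _ => abs_nonneg _

lemma abs_apply_le_l1Norm (x : ℕ+ →₀ ℝ) (i : ℕ+) : |x i| ≤ l1Norm x := by
  by_cases hi : i ∈ x.support
  · exact single_le_sum (f := fun j => |x j|) (fun _ _ => abs_nonneg _) hi
  · simp [Finsupp.notMem_support_iff.mp hi, l1Norm_nonneg]

lemma l1Norm_eq_sum_of_support_subset {x : ℕ+ →₀ ℝ} {s : Finset ℕ+} (hs : x.support ⊆ s) :
    l1Norm x = ∑ i ∈ s, |x i| :=
  sum_subset hs fun i _ hi => by rw [Finsupp.notMem_support_iff.mp hi, abs_zero]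

lemma l1Norm_single (p : ℕ+) (c : ℝ) : l1Norm (Finsupp.single p c) = |c| := by
  rw [l1Norm_eq_sum_of_support_subset Finsupp.support_single_subset, sum_singleton,
    Finsupp.single_eq_same]

lemma tsProj_apply (E : Finset ℕ+) (x : ℕ+ →₀ ℝ) (i : ℕ+) :
    tsProj E x i = if i ∈ E then x i else 0 :=
  Finsupp.filter_apply _ _ _

lemma tsProj_add (E : Finset ℕ+) (x y : ℕ+ →₀ ℝ) :
    tsProj E (x + y) = tsProj E x + tsProj E y :=
  Finsupp.filter_add

lemma tsProj_singleton (j : ℕ+) (x : ℕ+ →₀ ℝ) : tsProj {j} x = Finsupp.single j (x j) := by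
  ext i
  by_cases h : i = j
  · subst h; simp [tsProj_apply]
  · simp [tsProj_apply, h]

lemma sum_l1Norm_tsProj_le {d : ℕ} {E : Fin d → Finset ℕ+} (hE : Pairwise (Disjoint on E))
    (x : ℕ+ →₀ ℝ) : ∑ i, l1Norm (tsProj (E i) x) ≤ l1Norm x := by
  have hblock : ∀ i, l1Norm (tsProj (E i) x) = ∑ j ∈ x.support ∩ E i, |x j| := by
    intro i
    rw [l1Norm_eq_sum_of_support_subset (s := x.support ∩ E i)]
    · exact sum_congr rfl fun j hj => by rw [tsProj_apply, if_pos (mem_inter.1 hj).2]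
    · intro j hj
      rw [tsProj, Finsupp.support_filter, mem_filter] at hj
      exact mem_inter.2 hj
  calc ∑ i, l1Norm (tsProj (E i) x) = ∑ j ∈ univ.biUnion fun i => x.support ∩ E i, |x j| := by
        rw [sum_biUnion fun i _ j _ hij => (hE hij).mono inter_subset_right inter_subset_right]
        exact sum_congr rfl fun i _ => hblock i
    _ ≤ l1Norm x :=
        sum_le_sum_of_subset_of_nonneg (biUnion_subset.2 fun _ _ => inter_subset_left)
          fun _ _ _ => abs_nonneg _

section TsirelsonNorm

variable {θ : ℝ} {S : Set (Finset ℕ+)}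

lemma abs_apply_le_tnormAux_zero (x : ℕ+ →₀ ℝ) (i : ℕ+) : |x i| ≤ tnormAux θ S 0 x :=
  le_ciSup (f := fun j => |x j|) ⟨l1Norm x, by rintro _ ⟨j, rfl⟩; exact abs_apply_le_l1Norm x j⟩ i

lemma tnormAux_zero_le {x : ℕ+ →₀ ℝ} {B : ℝ} (h : ∀ i, |x i| ≤ B) : tnormAux θ S 0 x ≤ B :=
  ciSup_le h

lemma tnormAux_le_succ (m : ℕ) (x : ℕ+ →₀ ℝ) : tnormAux θ S m x ≤ tnormAux θ S (m + 1) x := by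
  rw [tnormAux]
  exact le_max_left _ _

lemma tnormAux_mono (x : ℕ+ →₀ ℝ) : Monotone fun m => tnormAux θ S m x :=
  monotone_nat_of_le_succ fun m => tnormAux_le_succ m x

lemma tnormAux_nonneg (m : ℕ) (x : ℕ+ →₀ ℝ) : 0 ≤ tnormAux θ S m x :=
  (abs_nonneg _).trans ((abs_apply_le_tnormAux_zero x 1).trans (tnormAux_mono x (Nat.zero_le m)))

lemma tnormAux_succ_le {m : ℕ} {x : ℕ+ →₀ ℝ} {B : ℝ} (hm : tnormAux θ S m x ≤ B)
    (hE : ∀ (d : ℕ) (E : Fin d → Finset ℕ+), TsAdmissible S E →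
      θ * ∑ i, tnormAux θ S m (tsProj (E i) x) ≤ B) :
    tnormAux θ S (m + 1) x ≤ B := by
  rw [tnormAux]
  refine max_le hm (Real.sSup_le ?_ ((tnormAux_nonneg m x).trans hm))
  rintro _ ⟨d, E, hadm, rfl⟩
  exact hE d E hadm

lemma max_tnormAux_zero_le_l1Norm (hθ1 : θ ≤ 1) (x : ℕ+ →₀ ℝ) :
    max (tnormAux θ S 0 x) (θ * l1Norm x) ≤ l1Norm x :=
  max_le (tnormAux_zero_le (abs_apply_le_l1Norm x))
    (mul_le_of_le_one_left (l1Norm_nonneg x) hθ1)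

lemma tnormAux_le_max (hθ0 : 0 ≤ θ) (hθ1 : θ ≤ 1) :
    ∀ (m : ℕ) (x : ℕ+ →₀ ℝ), tnormAux θ S m x ≤ max (tnormAux θ S 0 x) (θ * l1Norm x)
  | 0, _ => le_max_left _ _
  | m + 1, x => tnormAux_succ_le (tnormAux_le_max hθ0 hθ1 m x) fun _ E hE => by
      refine le_max_of_le_right (mul_le_mul_of_nonneg_left ?_ hθ0)
      calc ∑ i, tnormAux θ S m (tsProj (E i) x) ≤ ∑ i, l1Norm (tsProj (E i) x) :=
            sum_le_sum fun i _ => (tnormAux_le_max hθ0 hθ1 m _).trans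
              (max_tnormAux_zero_le_l1Norm hθ1 _)
        _ ≤ l1Norm x := sum_l1Norm_tsProj_le hE.pairwise_disjoint x

lemma tnormAux_le_l1Norm (hθ0 : 0 ≤ θ) (hθ1 : θ ≤ 1) (m : ℕ) (x : ℕ+ →₀ ℝ) :
    tnormAux θ S m x ≤ l1Norm x :=
  (tnormAux_le_max hθ0 hθ1 m x).trans (max_tnormAux_zero_le_l1Norm hθ1 x)

lemma le_tnormAux_succ (hθ0 : 0 ≤ θ) (hθ1 : θ ≤ 1) {m : ℕ} {x : ℕ+ →₀ ℝ} {d : ℕ}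
    {E : Fin d → Finset ℕ+} (hE : TsAdmissible S E) :
    θ * ∑ i, tnormAux θ S m (tsProj (E i) x) ≤ tnormAux θ S (m + 1) x := by
  rw [tnormAux]
  refine le_max_of_le_right (le_csSup ⟨l1Norm x, ?_⟩ ⟨d, E, hE, rfl⟩)
  rintro _ ⟨d', E', hE', rfl⟩
  calc θ * ∑ i, tnormAux θ S m (tsProj (E' i) x) ≤ ∑ i, tnormAux θ S m (tsProj (E' i) x) :=
        mul_le_of_le_one_left (sum_nonneg fun _ _ => tnormAux_nonneg m _) hθ1
    _ ≤ ∑ i, l1Norm (tsProj (E' i) x) := sum_le_sum fun _ _ => tnormAux_le_l1Norm hθ0 hθ1 m _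
    _ ≤ l1Norm x := sum_l1Norm_tsProj_le hE'.pairwise_disjoint x

lemma bddAbove_range_tnormAux (hθ0 : 0 ≤ θ) (hθ1 : θ ≤ 1) (x : ℕ+ →₀ ℝ) :
    BddAbove (Set.range fun m => tnormAux θ S m x) :=
  ⟨l1Norm x, by rintro _ ⟨m, rfl⟩; exact tnormAux_le_l1Norm hθ0 hθ1 m x⟩

lemma tnormAux_le_tnorm (hθ0 : 0 ≤ θ) (hθ1 : θ ≤ 1) (m : ℕ) (x : ℕ+ →₀ ℝ) :
    tnormAux θ S m x ≤ tnorm θ S x :=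
  le_ciSup (bddAbove_range_tnormAux hθ0 hθ1 x) m

lemma tendsto_tnormAux (hθ0 : 0 ≤ θ) (hθ1 : θ ≤ 1) (x : ℕ+ →₀ ℝ) :
    Tendsto (fun m => tnormAux θ S m x) atTop (𝓝 (tnorm θ S x)) :=
  tendsto_atTop_ciSup (tnormAux_mono x) (bddAbove_range_tnormAux hθ0 hθ1 x)

lemma abs_apply_le_tnorm (hθ0 : 0 ≤ θ) (hθ1 : θ ≤ 1) (x : ℕ+ →₀ ℝ) (i : ℕ+) :
    |x i| ≤ tnorm θ S x :=
  (abs_apply_le_tnormAux_zero x i).trans (tnormAux_le_tnorm hθ0 hθ1 0 x)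

lemma tnorm_le_max (hθ0 : 0 ≤ θ) (hθ1 : θ ≤ 1) (x : ℕ+ →₀ ℝ) :
    tnorm θ S x ≤ max (tnormAux θ S 0 x) (θ * l1Norm x) :=
  ciSup_le (tnormAux_le_max hθ0 hθ1 · x)

lemma tnorm_single (hθ0 : 0 ≤ θ) (hθ1 : θ ≤ 1) (p : ℕ+) (c : ℝ) :
    tnorm θ S (Finsupp.single p c) = |c| := by
  refine le_antisymm ?_ (by simpa using abs_apply_le_tnorm (S := S) hθ0 hθ1 (.single p c) p)
  exact ciSup_le fun m => (tnormAux_le_l1Norm hθ0 hθ1 m _).trans (l1Norm_single p c).le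

lemma tnorm_tsProj_singleton (hθ0 : 0 ≤ θ) (hθ1 : θ ≤ 1) (j : ℕ+) (x : ℕ+ →₀ ℝ) :
    tnorm θ S (tsProj {j} x) = |x j| := by
  rw [tsProj_singleton, tnorm_single hθ0 hθ1]

lemma mul_sum_tnorm_tsProj_le (hθ0 : 0 ≤ θ) (hθ1 : θ ≤ 1) {d : ℕ} {E : Fin d → Finset ℕ+}
    (hE : TsAdmissible S E) (x : ℕ+ →₀ ℝ) :
    θ * ∑ i, tnorm θ S (tsProj (E i) x) ≤ tnorm θ S x :=
  le_of_tendsto' ((tendsto_finsetSum _ fun _ _ => tendsto_tnormAux hθ0 hθ1 _).const_mul θ)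
    fun m => (le_tnormAux_succ hθ0 hθ1 hE).trans (tnormAux_le_tnorm hθ0 hθ1 (m + 1) x)

lemma tnormAux_add_le (hθ0 : 0 ≤ θ) (hθ1 : θ ≤ 1) :
    ∀ (m : ℕ) (x y : ℕ+ →₀ ℝ), tnormAux θ S m (x + y) ≤ tnormAux θ S m x + tnormAux θ S m y
  | 0, x, y => tnormAux_zero_le fun i => (abs_add_le (x i) (y i)).trans
      (add_le_add (abs_apply_le_tnormAux_zero x i) (abs_apply_le_tnormAux_zero y i))
  | m + 1, x, y => by
    refine tnormAux_succ_le ((tnormAux_add_le hθ0 hθ1 m x y).trans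
      (add_le_add (tnormAux_le_succ m x) (tnormAux_le_succ m y))) fun _ E hE => ?_
    calc θ * ∑ i, tnormAux θ S m (tsProj (E i) (x + y))
        ≤ θ * ∑ i, tnormAux θ S m (tsProj (E i) x) + θ * ∑ i, tnormAux θ S m (tsProj (E i) y) := by
          rw [← mul_add, ← sum_add_distrib]
          refine mul_le_mul_of_nonneg_left (sum_le_sum fun i _ => ?_) hθ0
          rw [tsProj_add]
          exact tnormAux_add_le hθ0 hθ1 m _ _
      _ ≤ _ := add_le_add (le_tnormAux_succ hθ0 hθ1 hE) (le_tnormAux_succ hθ0 hθ1 hE)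

/- An admissible family meets `p` in at most one block, so splitting off `x p • e p` costs at
most `θ |x p|` above the first level. -/
lemma tnormAux_le_max_erase (hθ0 : 0 ≤ θ) (hθ1 : θ ≤ 1) (p : ℕ+) :
    ∀ (m : ℕ) (x : ℕ+ →₀ ℝ),
      tnormAux θ S m x ≤ max |x p| (θ * |x p| + tnorm θ S (x.erase p))
  | 0, x => tnormAux_zero_le fun i => by
      by_cases hi : i = p
      · exact hi ▸ le_max_left _ _
      · refine le_max_of_le_right (le_add_of_nonneg_of_le (by positivity) ?_)
        simpa [Finsupp.erase_ne hi] using abs_apply_le_tnorm (S := S) hθ0 hθ1 (x.erase p) i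
  | m + 1, x => by
    refine tnormAux_succ_le (tnormAux_le_max_erase hθ0 hθ1 p m x) fun _ E hE =>
      le_max_of_le_right ?_
    have hsplit : ∀ i, tnormAux θ S m (tsProj (E i) x) ≤
        tnormAux θ S m (tsProj (E i) (x.erase p)) +
          l1Norm (tsProj (E i) (Finsupp.single p (x p))) := by
      intro i
      conv_lhs => rw [← Finsupp.erase_add_single p x, tsProj_add]
      exact (tnormAux_add_le hθ0 hθ1 m _ _).trans
        (add_le_add_right (tnormAux_le_l1Norm hθ0 hθ1 m _) _)
    calc θ * ∑ i, tnormAux θ S m (tsProj (E i) x)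
        ≤ θ * ∑ i, tnormAux θ S m (tsProj (E i) (x.erase p)) +
            θ * ∑ i, l1Norm (tsProj (E i) (Finsupp.single p (x p))) := by
          rw [← mul_add, ← sum_add_distrib]
          exact mul_le_mul_of_nonneg_left (sum_le_sum fun i _ => hsplit i) hθ0
      _ ≤ tnorm θ S (x.erase p) + θ * |x p| := by
          refine add_le_add ((le_tnormAux_succ hθ0 hθ1 hE).trans (tnormAux_le_tnorm hθ0 hθ1 _ _))
            (mul_le_mul_of_nonneg_left ?_ hθ0)
          rw [← l1Norm_single p (x p)]
          exact sum_l1Norm_tsProj_le hE.pairwise_disjoint _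
      _ = θ * |x p| + tnorm θ S (x.erase p) := add_comm _ _

lemma tnorm_le_max_erase (hθ0 : 0 ≤ θ) (hθ1 : θ ≤ 1) (x : ℕ+ →₀ ℝ) (p : ℕ+) :
    tnorm θ S x ≤ max |x p| (θ * |x p| + tnorm θ S (x.erase p)) :=
  ciSup_le fun m => tnormAux_le_max_erase hθ0 hθ1 p m x

lemma add_min_le_abs_add_tnorm_erase (hθ0 : 0 ≤ θ) (hθ : θ ≤ 1 / 2) {x : ℕ+ →₀ ℝ} {p q : ℕ+}
    (hqp : q ≠ p) {t : ℝ} (ht : t ≤ tnorm θ S x) :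
    t + min |x q| (|x p| / 2) ≤ |x p| + tnorm θ S (x.erase p) := by
  have hθ1 : θ ≤ 1 := by linarith
  have hq : |x q| ≤ tnorm θ S (x.erase p) := by
    simpa [Finsupp.erase_ne hqp] using abs_apply_le_tnorm (S := S) hθ0 hθ1 (x.erase p) q
  rcases le_max_iff.1 (ht.trans (tnorm_le_max_erase hθ0 hθ1 x p)) with h | h
  · linarith [min_le_left |x q| (|x p| / 2)]
  · nlinarith [min_le_right |x q| (|x p| / 2), abs_nonneg (x p)]

end TsirelsonNorm

lemma schreier_succ_subset : ∀ k : ℕ, Schreier (k + 1) ⊆ Schreier (k + 2)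
  | 0, F, hF => by
    rcases F.eq_empty_or_nonempty with rfl | hne
    · exact Or.inl rfl
    · refine Or.inr ⟨1, fun _ => F, one_pos, fun _ => hF, fun _ => hne, ?_, ?_, ?_⟩
      · intro i j hij; omega
      · exact fun _ a _ => a.pos
      · ext; simp
  | k + 1, F, hF => by
    rcases hF with rfl | ⟨d, G, hd, hG, hne, hord, hmin, rfl⟩
    · exact Or.inl rfl
    · exact Or.inr ⟨d, G, hd, fun i => schreier_succ_subset k (hG i), hne, hord, hmin, rfl⟩

lemma schreier_mono {m m' : ℕ} (hm : 1 ≤ m) (h : m ≤ m') : Schreier m ⊆ Schreier m' := by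
  obtain ⟨k, rfl⟩ := Nat.exists_eq_add_of_le' hm
  obtain ⟨k', rfl⟩ := Nat.exists_eq_add_of_le' (hm.trans h)
  exact monotone_nat_of_le_succ (f := fun k => Schreier (k + 1)) schreier_succ_subset
    (by omega : k ≤ k')

lemma union_mem_schreier_two {A B : Finset ℕ+} (hA : A ∈ Schreier 1) (hB : B ∈ Schreier 1)
    (hAne : A.Nonempty) (hBne : B.Nonempty) (hAB : ∀ a ∈ A, ∀ b ∈ B, a < b)
    (hA2 : ∀ a ∈ A, 2 ≤ (a : ℕ)) : A ∪ B ∈ Schreier 2 := by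
  refine Or.inr ⟨2, ![A, B], two_pos, ?_, ?_, ?_, ?_, ?_⟩
  · intro i; fin_cases i <;> simpa
  · intro i; fin_cases i <;> simpa
  · intro i j hij a ha b hb
    fin_cases i <;> fin_cases j <;> simp at hij
    exact hAB a (by simpa using ha) b (by simpa using hb)
  · intro i a ha
    fin_cases i
    · exact hA2 a (by simpa using ha)
    · obtain ⟨a₀, ha₀⟩ := hAne
      exact (hA2 a₀ ha₀).trans (PNat.coe_le_coe _ _ |>.2 (hAB a₀ ha₀ a (by simpa using ha)).le)
  · ext; simp [Fin.exists_fin_two]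

lemma cons_ordered {α : Type*} [LT α] {d : ℕ} {A : Finset α} {E : Fin d → Finset α}
    (hA : ∀ i, ∀ a ∈ A, ∀ b ∈ E i, a < b)
    (hE : ∀ i j : Fin d, i < j → ∀ a ∈ E i, ∀ b ∈ E j, a < b) :
    ∀ i j : Fin (d + 1), i < j → ∀ a ∈ (Fin.cons A E : Fin (d + 1) → Finset α) i,
      ∀ b ∈ (Fin.cons A E : Fin (d + 1) → Finset α) j, a < b := by
  intro i j hij
  cases i using Fin.cases with
  | zero =>
    cases j using Fin.cases with
    | zero => exact absurd hij (lt_irrefl 0)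
    | succ j => simpa using hA j
  | succ i =>
    cases j using Fin.cases with
    | zero => exact absurd hij (Fin.not_lt_zero _)
    | succ j => simpa using hE i j (Fin.succ_lt_succ_iff.1 hij)

def blockAbove (P : ℕ+) (N : ℕ) : Finset ℕ+ :=
  univ.image fun k : Fin (N + 1) => P + (k : ℕ).succPNat

lemma lt_of_mem_blockAbove {P : ℕ+} {N : ℕ} {i : ℕ+} (hi : i ∈ blockAbove P N) : P < i := by
  obtain ⟨k, -, rfl⟩ := mem_image.1 hi
  exact PNat.lt_add_right _ _

lemma add_succPNat_mem_blockAbove (P : ℕ+) (N : ℕ) (k : Fin (N + 1)) :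
    P + (k : ℕ).succPNat ∈ blockAbove P N :=
  mem_image_of_mem _ (mem_univ k)

lemma card_blockAbove_le (P : ℕ+) (N : ℕ) : (blockAbove P N).card ≤ N + 1 :=
  card_image_le.trans (by simp)

lemma blockAbove_mem_schreier_one {P : ℕ+} {N : ℕ} (hPN : N + 1 ≤ (P : ℕ)) :
    blockAbove P N ∈ Schreier 1 := fun a ha =>
  calc (blockAbove P N).card ≤ N + 1 := card_blockAbove_le P N
    _ ≤ a := hPN.trans ((PNat.coe_lt_coe _ _).2 (lt_of_mem_blockAbove ha)).le

lemma strictMono_add_succPNat (P : ℕ+) : StrictMono fun k : ℕ => P + k.succPNat := by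
  intro k l h
  rw [← PNat.coe_lt_coe, PNat.add_coe, PNat.add_coe, Nat.succPNat_coe, Nat.succPNat_coe]
  omega

lemma tsAdmissible_singletons {n : ℕ} (hn : 1 ≤ n) {P : ℕ+} {N : ℕ} (hPN : N + 1 ≤ (P : ℕ)) :
    TsAdmissible (Schreier n) fun k : Fin (N + 1) => ({P + (k : ℕ).succPNat} : Finset ℕ+) := by
  refine ⟨fun _ => singleton_nonempty _, ?_, fun k => P + (k : ℕ).succPNat,
    fun _ => by simp, schreier_mono le_rfl hn (blockAbove_mem_schreier_one hPN)⟩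
  intro i j hij a ha b hb
  rw [mem_singleton] at ha hb
  exact ha ▸ hb ▸ strictMono_add_succPNat P hij

lemma pair_union_blockAbove_mem_schreier {n : ℕ} (hn : 2 ≤ n) {p P : ℕ+} {N : ℕ}
    (hp : 2 ≤ (p : ℕ)) (hpP : p < P) (hPN : N + 1 ≤ (P : ℕ)) :
    {p, p + 1} ∪ blockAbove P N ∈ Schreier n := by
  refine schreier_mono (by norm_num) hn (union_mem_schreier_two ?_
    (blockAbove_mem_schreier_one hPN) (insert_nonempty _ _)
    ⟨_, add_succPNat_mem_blockAbove P N 0⟩ ?_ ?_)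
  · intro a ha
    have : (p : ℕ) ≤ a := by
      simp only [mem_insert, mem_singleton] at ha
      rcases ha with rfl | rfl <;> simp
    exact card_le_two.trans (hp.trans this)
  · intro a ha b hb
    simp only [mem_insert, mem_singleton] at ha
    refine lt_of_le_of_lt ?_ (lt_of_mem_blockAbove hb)
    rcases ha with rfl | rfl
    exacts [hpP.le, PNat.add_one_le_iff.2 hpP]
  · intro a ha
    simp only [mem_insert, mem_singleton] at ha
    rcases ha with rfl | rfl
    · exact hp
    · simp; omega

lemma tsAdmissible_spread {n : ℕ} (hn : 2 ≤ n) {p P : ℕ+} {N : ℕ} (hp : 2 ≤ (p : ℕ))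
    (hpP : p < P) (hPN : N + 1 ≤ (P : ℕ)) :
    TsAdmissible (Schreier n) (Fin.cons {p} (Fin.cons (Ioc p P)
      fun k : Fin (N + 1) => {P + (k : ℕ).succPNat}) : Fin (N + 3) → Finset ℕ+) := by
  have hIoc : IsLeast (Set.Ioc p P) (p + 1) :=
    ⟨⟨PNat.lt_add_right _ _, PNat.add_one_le_iff.2 hpP⟩, fun b hb => PNat.add_one_le_iff.2 hb.1⟩
  refine ⟨?_, ?_, Fin.cons p (Fin.cons (p + 1) fun k : Fin (N + 1) => P + (k : ℕ).succPNat),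
    ?_, ?_⟩
  · simp [Fin.forall_fin_succ, hpP]
  · refine cons_ordered ?_ (cons_ordered ?_ (tsAdmissible_singletons (n := 1) le_rfl hPN).2.1)
    · intro i a ha b hb
      rw [mem_singleton] at ha
      subst ha
      cases i using Fin.cases with
      | zero => exact (mem_Ioc.1 hb).1
      | succ k =>
        rw [Fin.cons_succ, mem_singleton] at hb
        exact hb ▸ hpP.trans (PNat.lt_add_right _ _)
    · simp only [mem_Ioc, mem_singleton, forall_eq]
      exact fun k a ha => ha.2.trans_lt (PNat.lt_add_right _ _)
  · simpa [Fin.forall_fin_succ] using hIoc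
  · convert pair_union_blockAbove_mem_schreier hn hp hpP hPN using 1
    apply coe_injective
    simp [blockAbove, Fin.range_cons]

def flatAbove (P : ℕ+) (N : ℕ) (c : ℝ) : ℕ+ →₀ ℝ :=
  Finsupp.indicator (blockAbove P N) fun _ _ => c

lemma flatAbove_apply (P : ℕ+) (N : ℕ) (c : ℝ) (i : ℕ+) :
    flatAbove P N c i = if i ∈ blockAbove P N then c else 0 := by
  simp [flatAbove, Finsupp.indicator_apply]

lemma flatAbove_apply_add_succPNat (P : ℕ+) (N : ℕ) (c : ℝ) (k : Fin (N + 1)) :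
    flatAbove P N c (P + (k : ℕ).succPNat) = c := by
  rw [flatAbove_apply, if_pos (add_succPNat_mem_blockAbove P N k)]

lemma flatAbove_apply_of_le {P : ℕ+} (N : ℕ) (c : ℝ) {i : ℕ+} (hi : i ≤ P) :
    flatAbove P N c i = 0 := by
  rw [flatAbove_apply, if_neg fun h => (lt_of_mem_blockAbove h).not_ge hi]

section FlatVectors

variable {θ : ℝ} {n : ℕ}

lemma tnorm_flatAbove (hθ0 : 0 ≤ θ) (hθ1 : θ ≤ 1) (hn : 1 ≤ n) {P : ℕ+} {N : ℕ}
    (hPN : N + 1 ≤ (P : ℕ)) {c : ℝ} (hc0 : 0 ≤ c) (hc1 : c ≤ 1) (hc : θ * (N + 1) * c = 1) :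
    tnorm θ (Schreier n) (flatAbove P N c) = 1 := by
  refine le_antisymm ((tnorm_le_max hθ0 hθ1 _).trans (max_le ?_ ?_)) ?_
  · refine tnormAux_zero_le fun i => ?_
    rw [flatAbove_apply]
    split_ifs <;> simp [abs_of_nonneg hc0, hc1]
  · rw [← hc, mul_assoc]
    refine mul_le_mul_of_nonneg_left ?_ hθ0
    rw [l1Norm_eq_sum_of_support_subset (x := flatAbove P N c)
      (Finsupp.support_indicator_subset _ _),
      sum_congr rfl fun i hi => by rw [flatAbove_apply, if_pos hi, abs_of_nonneg hc0],
      sum_const, nsmul_eq_mul]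
    exact mul_le_mul_of_nonneg_right (by exact_mod_cast card_blockAbove_le P N) hc0
  · calc (1 : ℝ) = θ * ∑ k : Fin (N + 1),
          tnorm θ (Schreier n) (tsProj {P + (k : ℕ).succPNat} (flatAbove P N c)) := by
          rw [sum_congr rfl fun k _ => by rw [tnorm_tsProj_singleton hθ0 hθ1,
            flatAbove_apply_add_succPNat, abs_of_nonneg hc0], sum_const, card_univ,
            Fintype.card_fin, nsmul_eq_mul, ← hc, mul_assoc]
          push_cast
          ring
      _ ≤ _ := mul_sum_tnorm_tsProj_le hθ0 hθ1 (tsAdmissible_singletons hn hPN) _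

lemma mul_spread_le_tnorm (hθ0 : 0 ≤ θ) (hθ1 : θ ≤ 1) (hn : 2 ≤ n) {p P : ℕ+} {N : ℕ}
    (hp : 2 ≤ (p : ℕ)) (hpP : p < P) (hPN : N + 1 ≤ (P : ℕ)) (z : ℕ+ →₀ ℝ) :
    θ * (|z p| + tnorm θ (Schreier n) (tsProj (Ioc p P) z) +
      ∑ k : Fin (N + 1), |z (P + (k : ℕ).succPNat)|) ≤ tnorm θ (Schreier n) z := by
  simpa [Fin.sum_univ_succ, tnorm_tsProj_singleton hθ0 hθ1, add_assoc] using
    mul_sum_tnorm_tsProj_le hθ0 hθ1 (tsAdmissible_spread hn hp hpP hPN) z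

lemma mul_add_le_tnorm_add (hθ0 : 0 ≤ θ) (hθ1 : θ ≤ 1) (hn : 2 ≤ n) {p P : ℕ+} {N : ℕ}
    (hp : 2 ≤ (p : ℕ)) (hpP : p < P) (hPN : N + 1 ≤ (P : ℕ)) {b w : ℕ+ →₀ ℝ}
    (hb : ∀ i, b i ≠ 0 → p ≤ i ∧ i ≤ P) (hw : ∀ i ≤ P, w i = 0) :
    θ * (|b p| + tnorm θ (Schreier n) (b.erase p) +
      ∑ k : Fin (N + 1), |w (P + (k : ℕ).succPNat)|) ≤ tnorm θ (Schreier n) (b + w) := by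
  have hproj : tsProj (Ioc p P) (b + w) = b.erase p := by
    ext i
    rw [tsProj_apply, Finsupp.add_apply]
    by_cases hip : i = p
    · subst hip
      simp
    rw [Finsupp.erase_ne hip]
    split_ifs with hi
    · rw [hw i (mem_Ioc.1 hi).2, add_zero]
    · by_contra hbi
      obtain ⟨hpi, hiP⟩ := hb i (Ne.symm hbi)
      exact hi (mem_Ioc.2 ⟨lt_of_le_of_ne hpi (Ne.symm hip), hiP⟩)
  have hbk : ∀ k : Fin (N + 1), b (P + (k : ℕ).succPNat) = 0 := fun k => by
    by_contra hbk
    exact (PNat.lt_add_right P _).not_ge (hb _ hbk).2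
  simpa [hproj, hw p hpP.le, hbk] using mul_spread_le_tnorm hθ0 hθ1 hn hp hpP hPN (b + w)

lemma exists_tnorm_eq_one_le_tnorm_add_sub (hθ0 : 0 < θ) (hθ1 : θ ≤ 1) (hn : 2 ≤ n) {p : ℕ+}
    (hp : 2 ≤ (p : ℕ)) {b : ℕ+ →₀ ℝ} (hb : ∀ i < p, b i = 0) :
    ∃ y, tnorm θ (Schreier n) y = 1 ∧
      θ * (|b p| + tnorm θ (Schreier n) (b.erase p)) + 1 ≤ tnorm θ (Schreier n) (b + y) ∧
      θ * (|b p| + tnorm θ (Schreier n) (b.erase p)) + 1 ≤ tnorm θ (Schreier n) (b - y) := by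
  set N := ⌊θ⁻¹⌋₊
  have hN : 1 ≤ θ * (N + 1) :=
    calc 1 = θ * θ⁻¹ := (mul_inv_cancel₀ hθ0.ne').symm
      _ ≤ θ * (N + 1) := mul_le_mul_of_nonneg_left (Nat.lt_floor_add_one θ⁻¹).le hθ0.le
  set c := (θ * (N + 1))⁻¹
  have hc : θ * (N + 1) * c = 1 := mul_inv_cancel₀ (by positivity)
  have hc0 : 0 ≤ c := by positivity
  set P : ℕ+ := (b.support.sup (fun i => (i : ℕ)) + p + N).succPNat
  have hpP : p < P := by rw [← PNat.coe_lt_coe, Nat.succPNat_coe]; omega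
  have hPN : N + 1 ≤ (P : ℕ) := by rw [Nat.succPNat_coe]; omega
  have hbP : ∀ i, b i ≠ 0 → p ≤ i ∧ i ≤ P := fun i hi => by
    refine ⟨not_lt.1 fun h => hi (hb i h), ?_⟩
    have := le_sup (f := fun i : ℕ+ => (i : ℕ)) (Finsupp.mem_support_iff.2 hi)
    rw [← PNat.coe_le_coe, Nat.succPNat_coe]
    omega
  have key : ∀ w : ℕ+ →₀ ℝ, (∀ i ≤ P, w i = 0) →
      (∀ k : Fin (N + 1), |w (P + (k : ℕ).succPNat)| = c) →
      θ * (|b p| + tnorm θ (Schreier n) (b.erase p)) + 1 ≤ tnorm θ (Schreier n) (b + w) := by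
    intro w hw hwc
    have := mul_add_le_tnorm_add hθ0.le hθ1 hn hp hpP hPN hbP hw
    simp only [hwc, sum_const, card_univ, Fintype.card_fin, nsmul_eq_mul] at this
    push_cast at this
    linarith
  refine ⟨flatAbove P N c, tnorm_flatAbove hθ0.le hθ1 (by omega) hPN hc0
    (inv_le_one_of_one_le₀ hN) hc, key _ (fun i hi => flatAbove_apply_of_le N c hi)
    fun k => by rw [flatAbove_apply_add_succPNat, abs_of_nonneg hc0], ?_⟩
  rw [sub_eq_add_neg]
  exact key _ (fun i hi => by simp [flatAbove_apply_of_le N c hi])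
    fun k => by simp [flatAbove_apply_add_succPNat, abs_of_nonneg hc0]

end FlatVectors

lemma exists_finsupp_near {ι E : Type*} [SeminormedAddCommGroup E] [Module ℝ E] {e : ι → E}
    {a : ι → ℝ} {v : E} (ha : HasSum (fun i => a i • e i) v) {ε : ℝ} (hε : 0 < ε)
    (s : Finset ι) :
    ∃ b : ι →₀ ℝ, (∀ i ∈ s, b i = a i) ∧ (∀ i, a i = 0 → b i = 0) ∧
      ‖Finsupp.linearCombination ℝ e b - v‖ < ε := by
  classical
  obtain ⟨t, ht⟩ := Metric.tendsto_atTop.1 ha ε hε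
  refine ⟨∑ i ∈ t ∪ s, Finsupp.single i (a i), fun i hi => ?_, fun i hi => ?_, ?_⟩
  · simp [Finsupp.finsetSum_apply, Finsupp.single_apply, hi]
  · simp [Finsupp.finsetSum_apply, Finsupp.single_apply, hi]
  · simpa [map_sum, dist_eq_norm] using ht _ subset_union_left

lemma exists_eq_sign_smul_of_support_subsingleton {ι E : Type*} [NormedAddCommGroup E]
    [NormedSpace ℝ E] {e : ι → E} (he : ∀ i, ‖e i‖ = 1) {v : E} (hv : ‖v‖ = 1) {a : ι → ℝ}
    (ha : HasSum (fun i => a i • e i) v) (hsub : (Function.support a).Subsingleton) :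
    ∃ (m : ι) (ε : ℝ), a m ≠ 0 ∧ (ε = 1 ∨ ε = -1) ∧ v = ε • e m := by
  obtain ⟨m, hm⟩ : ∃ m, a m ≠ 0 := by
    by_contra! h0
    have hv0 : v = 0 := ha.unique (by simp [h0])
    simp [hv0] at hv
  have hvm : v = a m • e m := ha.unique <| hasSum_single m fun i hi => by
    rw [not_not.1 fun hai => hi (hsub hai hm), zero_smul]
  have habs : |a m| = 1 := by simpa [hvm, norm_smul, he] using hv
  exact ⟨m, a m, hm, (abs_eq zero_le_one).1 habs, hvm⟩

end Tsirelson

namespace IsTsirelsonSpace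

open Tsirelson

variable {θ : ℝ} {n : ℕ} {X : Type*} [NormedAddCommGroup X] [NormedSpace ℝ X] {e : ℕ+ → X}

lemma norm_linearCombination (hX : IsTsirelsonSpace θ n X e) (b : ℕ+ →₀ ℝ) :
    ‖Finsupp.linearCombination ℝ e b‖ = tnorm θ (Schreier n) b := by
  rw [Finsupp.linearCombination_apply]
  exact hX.norm_embed b

lemma norm_apply (hX : IsTsirelsonSpace θ n X e) (hθ0 : 0 ≤ θ) (hθ1 : θ ≤ 1) (m : ℕ+) :
    ‖e m‖ = 1 := by
  simpa [tnorm_single hθ0 hθ1] using hX.norm_linearCombination (Finsupp.single m 1)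

lemma exists_lt_min_norm_add_sub (hX : IsTsirelsonSpace θ n X e) (hθ0 : 0 < θ)
    (hθ : θ ≤ 1 / 2) (hn : 2 ≤ n) {v : X} (hv : ‖v‖ = 1) {a : ℕ+ → ℝ}
    (ha : HasSum (fun i => a i • e i) v) {p q : ℕ+} (hp : 2 ≤ (p : ℕ)) (hap : a p ≠ 0)
    (hbelow : ∀ i < p, a i = 0) (hqp : q ≠ p) (haq : a q ≠ 0) :
    ∃ y : X, ‖y‖ = 1 ∧ θ * ((⌊θ⁻¹⌋₊ : ℝ) + 1) < min ‖v + y‖ ‖v - y‖ := by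
  have hθ1 : θ ≤ 1 := by linarith
  set J := Finsupp.linearCombination ℝ e
  set η := min |a q| (|a p| / 2)
  have hη : 0 < η := lt_min (abs_pos.2 haq) (by positivity)
  set ε := θ * η / 3 with hε_def
  obtain ⟨b, hbs, hb0, hbv⟩ := exists_finsupp_near ha (by positivity : 0 < ε) {p, q}
  obtain ⟨y, hy, hplus, hminus⟩ := exists_tnorm_eq_one_le_tnorm_add_sub hθ0 hθ1 hn hp
    (b := b) fun i hi => hb0 i (hbelow i hi)
  set r := tnorm θ (Schreier n) (b.erase p)
  rw [hbs p (by simp)] at hplus hminus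
  have hgap : 1 - ε + η ≤ |a p| + r := by
    have hb1 : 1 - ε ≤ tnorm θ (Schreier n) b := by
      rw [← hX.norm_linearCombination]
      linarith [norm_sub_norm_le v (J b), norm_sub_rev v (J b)]
    simpa [hbs p, hbs q] using add_min_le_abs_add_tnorm_erase hθ0.le hθ hqp hb1
  have hfloor : θ * ⌊θ⁻¹⌋₊ ≤ 1 :=
    calc θ * ⌊θ⁻¹⌋₊ ≤ θ * θ⁻¹ := mul_le_mul_of_nonneg_left (Nat.floor_le (by positivity)) hθ0.le
      _ = 1 := mul_inv_cancel₀ hθ0.ne'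
  have hθgap : θ * (1 - ε + η) ≤ θ * (|a p| + r) := mul_le_mul_of_nonneg_left hgap hθ0.le
  have hε : ε * (1 + θ) ≤ θ * η := by rw [hε_def]; nlinarith [mul_pos hθ0 hη]
  have hlow : ∀ (z : ℕ+ →₀ ℝ) (u : X), J z - u = J b - v →
      θ * (|a p| + r) + 1 ≤ tnorm θ (Schreier n) z → θ * ((⌊θ⁻¹⌋₊ : ℝ) + 1) < ‖u‖ := by
    intro z u hzu hz
    have hzu' : tnorm θ (Schreier n) z - ε < ‖u‖ := by
      rw [← hX.norm_linearCombination]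
      linarith [norm_sub_norm_le (J z) u, hzu ▸ hbv]
    linarith
  refine ⟨J y, by rw [hX.norm_linearCombination, hy], lt_min ?_ ?_⟩
  · exact hlow _ _ (by rw [map_add]; abel) hplus
  · exact hlow _ _ (by rw [map_sub]; abel) hminus

end IsTsirelsonSpace

/-- For `n ≥ 2`: if `v` in the unit sphere of `T[θ, S_n]` has first
coordinate `0` and `min(‖v + y‖, ‖v − y‖) ≤ θ(⌊θ⁻¹⌋ + 1)` for every `y` in the unit
sphere, then `v = ± e_m` for some `m > 1`. -/
theorem tsirelson_min_norm_small_char_Sn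
    (θ : ℝ) (hθ0 : 0 < θ) (hθ : θ ≤ 1 / 2) (n : ℕ) (hn : 2 ≤ n)
    (X : Type*) [NormedAddCommGroup X] [NormedSpace ℝ X] (e : ℕ+ → X)
    (hX : IsTsirelsonSpace θ n X e)
    (v : X) (hv : ‖v‖ = 1) (a : ℕ+ → ℝ) (ha : HasSum (fun i => a i • e i) v)
    (h1 : a 1 = 0)
    (h : ∀ y : X, ‖y‖ = 1 → min ‖v + y‖ ‖v - y‖ ≤ θ * ((⌊θ⁻¹⌋₊ : ℝ) + 1)) :
    ∃ (m : ℕ+) (ε : ℝ), 1 < m ∧ (ε = 1 ∨ ε = -1) ∧ v = ε • e m := by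
  have hne_one : ∀ i, a i ≠ 0 → 1 < i := fun i hi =>
    one_lt_iff_ne_one.2 fun hi1 => hi (hi1 ▸ h1)
  rcases (Function.support a).subsingleton_or_nontrivial with hsub | hnt
  · obtain ⟨m, ε, hm, hε, hvm⟩ := Tsirelson.exists_eq_sign_smul_of_support_subsingleton
      (hX.norm_apply hθ0.le (by linarith)) hv ha hsub
    exact ⟨m, ε, hne_one m hm, hε, hvm⟩
  · have hwf : WellFounded ((· < ·) : ℕ+ → ℕ+ → Prop) := wellFounded_lt
    set p := hwf.min _ hnt.nonempty
    have hap : a p ≠ 0 := hwf.min_mem _ hnt.nonempty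
    have hbelow : ∀ i < p, a i = 0 := fun i hi =>
      not_not.1 fun hai => hwf.not_lt_min _ hai hi
    obtain ⟨q, haq, hqp⟩ := hnt.exists_ne p
    have hp : 2 ≤ (p : ℕ) := PNat.coe_lt_coe 1 p |>.2 (hne_one p hap)
    obtain ⟨y, hy, hlt⟩ := hX.exists_lt_min_norm_add_sub hθ0 hθ hn hv ha hp hap hbelow hqp haq
    exact absurd (h y hy) hlt.not_ge
end
end

section
/- Let θ ∈ (0, 1/2], let n ≥ 1 be an integer, let x ∈ S_{T[θ,S_n]} with basis expansion x = Σ_i x_i e_i, and let j be a positive integer. Then ‖x + e_j‖ = 2 if and only if x_j = 1. -/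
open scoped BigOperators

noncomputable section

-- ℓ¹ norm
def l1 (x : ℕ+ →₀ ℝ) : ℝ := ∑ i ∈ x.support, |x i|

lemma l1_nonneg (x : ℕ+ →₀ ℝ) : 0 ≤ l1 x :=
  Finset.sum_nonneg fun _ _ => abs_nonneg _

lemma abs_le_l1 (x : ℕ+ →₀ ℝ) (i : ℕ+) : |x i| ≤ l1 x := by
  by_cases h : i ∈ x.support
  · exact Finset.single_le_sum (fun k _ => abs_nonneg (x k)) h
  · simp [Finsupp.notMem_support_iff.mp h, l1_nonneg]

lemma l1_proj_le (E : Finset ℕ+) (x : ℕ+ →₀ ℝ) : l1 (tsProj E x) ≤ l1 x := by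
  classical
  unfold l1 tsProj
  rw [Finsupp.support_filter]
  refine le_trans (le_of_eq (Finset.sum_congr rfl ?_))
    (Finset.sum_le_sum_of_subset_of_nonneg (Finset.filter_subset _ _)
      (fun k _ _ => abs_nonneg _))
  intro k hk
  rw [Finsupp.filter_apply_pos _ _ (Finset.mem_filter.mp hk).2]

lemma sum_l1_proj_le {d : ℕ} (E : Fin d → Finset ℕ+)
    (hord : ∀ i j : Fin d, i < j → ∀ a ∈ E i, ∀ b ∈ E j, a < b)
    (x : ℕ+ →₀ ℝ) : ∑ i, l1 (tsProj (E i) x) ≤ l1 x := by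
  classical
  have hdisj : ∀ i j : Fin d, i ≠ j →
      Disjoint (x.support.filter (· ∈ E i)) (x.support.filter (· ∈ E j)) := by
    intro i j hij
    refine Finset.disjoint_left.mpr fun k hki hkj => ?_
    have h1 := (Finset.mem_filter.mp hki).2
    have h2 := (Finset.mem_filter.mp hkj).2
    rcases lt_or_gt_of_ne hij with h | h
    · exact absurd (hord i j h k h1 k h2) (lt_irrefl k)
    · exact absurd (hord j i h k h2 k h1) (lt_irrefl k)
  have hrw : ∀ i : Fin d, l1 (tsProj (E i) x)
      = ∑ k ∈ x.support.filter (· ∈ E i), |x k| := by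
    intro i
    unfold l1 tsProj
    rw [Finsupp.support_filter]
    refine Finset.sum_congr rfl fun k hk => ?_
    rw [Finsupp.filter_apply_pos _ _ (Finset.mem_filter.mp hk).2]
  rw [Finset.sum_congr rfl fun i _ => hrw i]
  rw [← Finset.sum_biUnion]
  · exact Finset.sum_le_sum_of_subset_of_nonneg
      (Finset.biUnion_subset.mpr fun i _ => Finset.filter_subset _ _)
      (fun k _ _ => abs_nonneg _)
  · intro i _ j _ hij
    exact hdisj i j hij

lemma tnormAux_nonneg (θ : ℝ) (S : Set (Finset ℕ+)) (m : ℕ) (x : ℕ+ →₀ ℝ) :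
    0 ≤ tnormAux θ S m x := by
  induction m with
  | zero =>
    exact Real.iSup_nonneg fun i => abs_nonneg _
  | succ m ih =>
    exact le_trans ih (le_max_left _ _)

lemma tnormAux_le_l1 (θ : ℝ) (hθ0 : 0 ≤ θ) (hθ1 : θ ≤ 1) (S : Set (Finset ℕ+))
    (m : ℕ) (x : ℕ+ →₀ ℝ) : tnormAux θ S m x ≤ l1 x := by
  induction m generalizing x with
  | zero =>
    exact ciSup_le fun i => abs_le_l1 x i
  | succ m ih =>
    refine max_le (ih x) (Real.sSup_le ?_ (l1_nonneg x))
    rintro r ⟨d, E, hE, rfl⟩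
    calc θ * ∑ i, tnormAux θ S m (tsProj (E i) x)
        ≤ 1 * ∑ i, l1 (tsProj (E i) x) := by
          apply mul_le_mul hθ1 (Finset.sum_le_sum fun i _ => ih _)
            (Finset.sum_nonneg fun i _ => tnormAux_nonneg _ _ _ _) zero_le_one
      _ ≤ l1 x := by rw [one_mul]; exact sum_l1_proj_le E hE.2.1 x

lemma tnorm_bddAbove (θ : ℝ) (hθ0 : 0 ≤ θ) (hθ1 : θ ≤ 1) (S : Set (Finset ℕ+))
    (x : ℕ+ →₀ ℝ) : BddAbove (Set.range fun m => tnormAux θ S m x) := by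
  refine ⟨l1 x, ?_⟩
  rintro r ⟨m, rfl⟩
  exact tnormAux_le_l1 θ hθ0 hθ1 S m x

lemma tnormAux_le_tnorm (θ : ℝ) (hθ0 : 0 ≤ θ) (hθ1 : θ ≤ 1) (S : Set (Finset ℕ+))
    (m : ℕ) (x : ℕ+ →₀ ℝ) : tnormAux θ S m x ≤ tnorm θ S x :=
  le_ciSup (tnorm_bddAbove θ hθ0 hθ1 S x) m

lemma tnorm_nonneg (θ : ℝ) (S : Set (Finset ℕ+)) (x : ℕ+ →₀ ℝ) : 0 ≤ tnorm θ S x :=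
  Real.iSup_nonneg fun m => tnormAux_nonneg θ S m x

lemma tnorm_le_l1 (θ : ℝ) (hθ0 : 0 ≤ θ) (hθ1 : θ ≤ 1) (S : Set (Finset ℕ+))
    (x : ℕ+ →₀ ℝ) : tnorm θ S x ≤ l1 x :=
  ciSup_le fun m => tnormAux_le_l1 θ hθ0 hθ1 S m x

lemma abs_le_tnorm (θ : ℝ) (hθ0 : 0 ≤ θ) (hθ1 : θ ≤ 1) (S : Set (Finset ℕ+))
    (x : ℕ+ →₀ ℝ) (i : ℕ+) : |x i| ≤ tnorm θ S x := by
  refine le_trans ?_ (tnormAux_le_tnorm θ hθ0 hθ1 S 0 x)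
  show |x i| ≤ ⨆ k, |x k|
  exact le_ciSup ⟨l1 x, by rintro r ⟨k, rfl⟩; exact abs_le_l1 x k⟩ i

-- the sSup set at stage m
def tsSet (θ : ℝ) (S : Set (Finset ℕ+)) (m : ℕ) (x : ℕ+ →₀ ℝ) : Set ℝ :=
  {r : ℝ | ∃ (d : ℕ) (E : Fin d → Finset ℕ+), TsAdmissible S E ∧
    r = θ * ∑ i, tnormAux θ S m (tsProj (E i) x)}

lemma tnormAux_succ (θ : ℝ) (S : Set (Finset ℕ+)) (m : ℕ) (x : ℕ+ →₀ ℝ) :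
    tnormAux θ S (m + 1) x = max (tnormAux θ S m x) (sSup (tsSet θ S m x)) := rfl

lemma tsSet_bddAbove (θ : ℝ) (hθ0 : 0 ≤ θ) (hθ1 : θ ≤ 1) (S : Set (Finset ℕ+))
    (m : ℕ) (x : ℕ+ →₀ ℝ) : BddAbove (tsSet θ S m x) := by
  refine ⟨l1 x, ?_⟩
  rintro r ⟨d, E, hE, rfl⟩
  calc θ * ∑ i, tnormAux θ S m (tsProj (E i) x)
      ≤ 1 * ∑ i, l1 (tsProj (E i) x) :=
        mul_le_mul hθ1 (Finset.sum_le_sum fun i _ => tnormAux_le_l1 θ hθ0 hθ1 S m _)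
          (Finset.sum_nonneg fun i _ => tnormAux_nonneg _ _ _ _) zero_le_one
    _ ≤ l1 x := by rw [one_mul]; exact sum_l1_proj_le E hE.2.1 x

lemma tsProj_add (E : Finset ℕ+) (u v : ℕ+ →₀ ℝ) :
    tsProj E (u + v) = tsProj E u + tsProj E v := by
  classical
  unfold tsProj
  exact Finsupp.filter_add

lemma tnormAux_add_le (θ : ℝ) (hθ0 : 0 ≤ θ) (hθ1 : θ ≤ 1) (S : Set (Finset ℕ+))
    (m : ℕ) (u v : ℕ+ →₀ ℝ) :
    tnormAux θ S m (u + v) ≤ tnormAux θ S m u + tnormAux θ S m v := by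
  induction m generalizing u v with
  | zero =>
    refine ciSup_le fun i => ?_
    calc |(u + v) i| ≤ |u i| + |v i| := by rw [Finsupp.add_apply]; exact abs_add_le _ _
      _ ≤ tnormAux θ S 0 u + tnormAux θ S 0 v := by
          refine add_le_add ?_ ?_
          · exact le_ciSup ⟨l1 u, by rintro r ⟨k, rfl⟩; exact abs_le_l1 u k⟩ i
          · exact le_ciSup ⟨l1 v, by rintro r ⟨k, rfl⟩; exact abs_le_l1 v k⟩ i
  | succ m ih =>
    rw [tnormAux_succ, tnormAux_succ, tnormAux_succ]
    refine max_le ?_ ?_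
    · exact le_trans (ih u v) (add_le_add (le_max_left _ _) (le_max_left _ _))
    · refine Real.sSup_le ?_
        (add_nonneg (le_trans (tnormAux_nonneg θ S m u) (le_max_left _ _))
          (le_trans (tnormAux_nonneg θ S m v) (le_max_left _ _)))
      rintro r ⟨d, E, hE, rfl⟩
      have h1 : θ * ∑ i, tnormAux θ S m (tsProj (E i) (u + v))
          ≤ (θ * ∑ i, tnormAux θ S m (tsProj (E i) u))
            + (θ * ∑ i, tnormAux θ S m (tsProj (E i) v)) := by
        rw [← mul_add, ← Finset.sum_add_distrib]
        refine mul_le_mul_of_nonneg_left (Finset.sum_le_sum fun i _ => ?_) hθ0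
        rw [tsProj_add]
        exact ih _ _
      refine le_trans h1 (add_le_add ?_ ?_)
      · exact le_trans
          (le_csSup (tsSet_bddAbove θ hθ0 hθ1 S m u) ⟨d, E, hE, rfl⟩)
          (le_max_right _ _)
      · exact le_trans
          (le_csSup (tsSet_bddAbove θ hθ0 hθ1 S m v) ⟨d, E, hE, rfl⟩)
          (le_max_right _ _)

lemma l1_single (j : ℕ+) : l1 (Finsupp.single j (1 : ℝ)) = 1 := by
  unfold l1
  rw [Finsupp.support_single_ne_zero j one_ne_zero]
  simp

lemma tnorm_single (θ : ℝ) (hθ0 : 0 ≤ θ) (hθ1 : θ ≤ 1) (S : Set (Finset ℕ+)) (j : ℕ+) :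
    tnorm θ S (Finsupp.single j (1 : ℝ)) = 1 := by
  refine le_antisymm ?_ ?_
  · calc tnorm θ S (Finsupp.single j 1) ≤ l1 (Finsupp.single j 1) :=
        tnorm_le_l1 θ hθ0 hθ1 S _
      _ = 1 := l1_single j
  · have := abs_le_tnorm θ hθ0 hθ1 S (Finsupp.single j 1) j
    simpa using this

lemma tnormAux_zero (θ : ℝ) (hθ0 : 0 ≤ θ) (hθ1 : θ ≤ 1) (S : Set (Finset ℕ+)) (m : ℕ) :
    tnormAux θ S m 0 = 0 := by
  refine le_antisymm ?_ (tnormAux_nonneg θ S m 0)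
  have := tnormAux_le_l1 θ hθ0 hθ1 S m 0
  simpa [l1] using this

-- key lemma
lemma tnormAux_single_proj_le (θ : ℝ) (hθ0 : 0 ≤ θ) (hθ1 : θ ≤ 1) (S : Set (Finset ℕ+))
    (m : ℕ) (j : ℕ+) (E : Finset ℕ+) :
    tnormAux θ S m (tsProj E (Finsupp.single j (1:ℝ)))
      ≤ if j ∈ E then 1 else 0 := by
  classical
  by_cases h : j ∈ E
  · rw [if_pos h]
    unfold tsProj
    rw [Finsupp.filter_single_of_pos _ h]
    exact le_trans (tnormAux_le_l1 θ hθ0 hθ1 S m _) (le_of_eq (l1_single j))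
  · rw [if_neg h]
    unfold tsProj
    rw [Finsupp.filter_single_of_neg _ h]
    exact le_of_eq (tnormAux_zero θ hθ0 hθ1 S m)


lemma sum_single_proj_le (θ : ℝ) (hθ0 : 0 ≤ θ) (hθ1 : θ ≤ 1) (S : Set (Finset ℕ+))
    (m : ℕ) (j : ℕ+) {d : ℕ} (E : Fin d → Finset ℕ+)
    (hord : ∀ i k : Fin d, i < k → ∀ a ∈ E i, ∀ b ∈ E k, a < b) :
    ∑ i, tnormAux θ S m (tsProj (E i) (Finsupp.single j (1:ℝ))) ≤ 1 := by
  classical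
  have h1 : ∑ i, tnormAux θ S m (tsProj (E i) (Finsupp.single j (1:ℝ)))
      ≤ ∑ i : Fin d, if j ∈ E i then (1:ℝ) else 0 :=
    Finset.sum_le_sum fun i _ => tnormAux_single_proj_le θ hθ0 hθ1 S m j (E i)
  refine le_trans h1 ?_
  rw [Finset.sum_boole]
  have hcard : (Finset.univ.filter fun i => j ∈ E i).card ≤ 1 := by
    refine Finset.card_le_one.mpr fun i hi k hk => ?_
    have hji := (Finset.mem_filter.mp hi).2
    have hjk := (Finset.mem_filter.mp hk).2
    by_contra hne
    rcases lt_or_gt_of_ne hne with h | h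
    · exact absurd (hord i k h j hji j hjk) (lt_irrefl j)
    · exact absurd (hord k i h j hjk j hji) (lt_irrefl j)
  exact_mod_cast Nat.cast_le.mpr hcard

/-- Key lemma A. -/
lemma tnorm_add_single_le (θ : ℝ) (hθ0 : 0 ≤ θ) (hθ1 : θ ≤ 1) (S : Set (Finset ℕ+))
    (b : ℕ+ →₀ ℝ) (j : ℕ+) :
    tnorm θ S (b + Finsupp.single j 1) ≤ max (|b j + 1|) (tnorm θ S b + θ) := by
  refine ciSup_le fun m => ?_
  induction m with
  | zero =>
    refine ciSup_le fun i => ?_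
    rcases eq_or_ne i j with rfl | h
    · refine le_trans (le_of_eq ?_) (le_max_left _ _)
      simp
    · refine le_trans ?_ (le_max_right _ _)
      have hb : (b + Finsupp.single j (1:ℝ)) i = b i := by
        simp [Finsupp.single_apply, (show ¬ j = i from fun hij => h hij.symm)]
      rw [hb]
      exact le_trans (abs_le_tnorm θ hθ0 hθ1 S b i) (by linarith)
  | succ m ih =>
    rw [tnormAux_succ]
    refine max_le ih (Real.sSup_le ?_ (le_trans (add_nonneg (tnorm_nonneg θ S b) hθ0) (le_max_right _ _)))
    rintro r ⟨d, E, hE, rfl⟩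
    have hsplit : ∀ i : Fin d, tnormAux θ S m (tsProj (E i) (b + Finsupp.single j 1))
        ≤ tnormAux θ S m (tsProj (E i) b)
          + tnormAux θ S m (tsProj (E i) (Finsupp.single j 1)) := by
      intro i
      rw [tsProj_add]
      exact tnormAux_add_le θ hθ0 hθ1 S m _ _
    calc θ * ∑ i, tnormAux θ S m (tsProj (E i) (b + Finsupp.single j 1))
        ≤ θ * (∑ i, tnormAux θ S m (tsProj (E i) b)
            + ∑ i, tnormAux θ S m (tsProj (E i) (Finsupp.single j 1))) := by
          refine mul_le_mul_of_nonneg_left ?_ hθ0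
          rw [← Finset.sum_add_distrib]
          exact Finset.sum_le_sum fun i _ => hsplit i
      _ = θ * ∑ i, tnormAux θ S m (tsProj (E i) b)
            + θ * ∑ i, tnormAux θ S m (tsProj (E i) (Finsupp.single j 1)) := by ring
      _ ≤ tnorm θ S b + θ * 1 := by
          refine add_le_add ?_ (mul_le_mul_of_nonneg_left
            (sum_single_proj_le θ hθ0 hθ1 S m j E hE.2.1) hθ0)
          refine le_trans (le_csSup (tsSet_bddAbove θ hθ0 hθ1 S m b) ⟨d, E, hE, rfl⟩) ?_
          refine le_trans (le_max_right (tnormAux θ S m b) _) ?_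
          rw [← tnormAux_succ]
          exact tnormAux_le_tnorm θ hθ0 hθ1 S (m+1) b
      _ ≤ max (|b j + 1|) (tnorm θ S b + θ) := by rw [mul_one]; exact le_max_right _ _

/-- For `x` in the unit sphere of `T[θ, S_n]` with coordinates `(xᵢ)`
and any `j`: `‖x + e_j‖ = 2` iff `x_j = 1`. -/
theorem tsirelson_norm_add_eq_two_iff
    (θ : ℝ) (hθ0 : 0 < θ) (hθ : θ ≤ 1 / 2) (n : ℕ) (hn : 1 ≤ n)
    (X : Type*) [NormedAddCommGroup X] [NormedSpace ℝ X] (e : ℕ+ → X)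
    (hX : IsTsirelsonSpace θ n X e)
    (x : X) (hx : ‖x‖ = 1) (a : ℕ+ → ℝ) (ha : HasSum (fun i => a i • e i) x)
    (j : ℕ+) :
    ‖x + e j‖ = 2 ↔ a j = 1 := by
  classical
  set S := Schreier n with hS
  have hθ0' : (0:ℝ) ≤ θ := le_of_lt hθ0
  have hθ1 : θ ≤ 1 := by linarith
  -- norm of e j
  have hejn : ‖e j‖ = 1 := by
    have h := hX.norm_embed (Finsupp.single j 1)
    rw [Finsupp.sum_single_index (zero_smul ℝ (e j)), one_smul] at h
    rw [h, ← hS, tnorm_single θ hθ0' hθ1 S j]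
  -- embedding is "additive" for adding e j
  have hemb : ∀ b : ℕ+ →₀ ℝ,
      ((b + Finsupp.single j 1).sum fun i c => c • e i)
        = (b.sum fun i c => c • e i) + e j := by
    intro b
    rw [Finsupp.sum_add_index' (fun i => zero_smul ℝ (e i))
      (fun i c₁ c₂ => add_smul c₁ c₂ (e i)),
      Finsupp.sum_single_index (zero_smul ℝ (e j)), one_smul]
  -- approximation by finitely supported vectors keeping the j-th coordinate
  have key : ∀ ε : ℝ, 0 < ε → ∃ b : ℕ+ →₀ ℝ, b j = a j ∧
      ‖x - (b.sum fun i c => c • e i)‖ < ε := by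
    intro ε hε
    have h := Metric.tendsto_nhds.mp ha ε hε
    obtain ⟨F₀, hF₀⟩ := Filter.eventually_atTop.mp h
    set F : Finset ℕ+ := F₀ ∪ {j} with hF
    have hFj : j ∈ F := by simp [hF]
    refine ⟨Finsupp.indicator F fun i _ => a i, Finsupp.indicator_of_mem hFj _, ?_⟩
    have hsum : ((Finsupp.indicator F fun i _ => a i).sum fun i c => c • e i)
        = ∑ i ∈ F, a i • e i := by
      rw [Finsupp.sum_of_support_subset _
        (fun i hi => Finsupp.support_indicator_subset _ _ hi) _
        (fun i _ => zero_smul ℝ (e i))]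
      exact Finset.sum_congr rfl fun i hi => by rw [Finsupp.indicator_of_mem hi]
    rw [hsum, norm_sub_rev, ← dist_eq_norm]
    exact hF₀ F (Finset.subset_union_left)
  -- bound used in both directions
  have htb : ∀ b : ℕ+ →₀ ℝ, ∀ ε : ℝ,
      ‖x - (b.sum fun i c => c • e i)‖ < ε → tnorm θ S b ≤ 1 + ε := by
    intro b ε hb
    have h1 : tnorm θ S b = ‖b.sum fun i c => c • e i‖ := (hX.norm_embed b).symm
    rw [h1]
    calc ‖b.sum fun i c => c • e i‖
        = ‖x - (x - (b.sum fun i c => c • e i))‖ := by rw [sub_sub_cancel]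
      _ ≤ ‖x‖ + ‖x - (b.sum fun i c => c • e i)‖ := norm_sub_le _ _
      _ ≤ 1 + ε := by rw [hx]; linarith
  constructor
  · -- forward
    intro h2
    have habs : ∀ ε : ℝ, 0 < ε → |a j| ≤ 1 + ε := by
      intro ε hε
      obtain ⟨b, hbj, hb⟩ := key ε hε
      calc |a j| = |b j| := by rw [hbj]
        _ ≤ tnorm θ S b := abs_le_tnorm θ hθ0' hθ1 S b j
        _ ≤ 1 + ε := htb b ε hb
    have haj1 : |a j| ≤ 1 := by
      by_contra hc
      push_neg at hc
      have := habs ((|a j| - 1) / 2) (by linarith)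
      linarith
    have hmain : ∀ ε : ℝ, 0 < ε → ε < 1/4 → 2 - ε ≤ |a j + 1| := by
      intro ε hε hε4
      obtain ⟨b, hbj, hb⟩ := key ε hε
      set u := b.sum fun i c => c • e i with hu
      have h1 : ‖x + e j‖ ≤ ‖u + e j‖ + ε := by
        calc ‖x + e j‖ = ‖(u + e j) + (x - u)‖ := by congr 1; abel
          _ ≤ ‖u + e j‖ + ‖x - u‖ := norm_add_le _ _
          _ ≤ ‖u + e j‖ + ε := by linarith
      have h2' : ‖u + e j‖ = tnorm θ S (b + Finsupp.single j 1) := by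
        rw [← hemb b]; exact hX.norm_embed _
      have h3 := tnorm_add_single_le θ hθ0' hθ1 S b j
      have h4 : tnorm θ S b ≤ 1 + ε := htb b ε hb
      have h5 : max (|b j + 1|) (tnorm θ S b + θ) ≤ max (|a j + 1|) ((1 + ε) + θ) := by
        rw [hbj]
        exact max_le_max le_rfl (by linarith)
      have h6 : 2 ≤ max (|a j + 1|) ((1 + ε) + θ) + ε := by
        rw [← h2]
        calc ‖x + e j‖ ≤ ‖u + e j‖ + ε := h1
          _ = tnorm θ S (b + Finsupp.single j 1) + ε := by rw [h2']
          _ ≤ max (|a j + 1|) ((1 + ε) + θ) + ε := by linarith [le_trans h3 h5]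
      rcases le_or_gt (|a j + 1|) ((1 + ε) + θ) with hc | hc
      · rw [max_eq_right hc] at h6; linarith
      · rw [max_eq_left hc.le] at h6; linarith
    have h7 : 2 ≤ |a j + 1| := by
      by_contra hc
      push_neg at hc
      have hε : (0:ℝ) < min (1/8) ((2 - |a j + 1|)/2) := by
        refine lt_min (by norm_num) (by linarith)
      have := hmain _ hε (lt_of_le_of_lt (min_le_left _ _) (by norm_num))
      have h8 : min (1/8) ((2 - |a j + 1|)/2) ≤ (2 - |a j + 1|)/2 := min_le_right _ _
      linarith
    have h9 := abs_le.mp haj1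
    have h10 : |a j + 1| = a j + 1 := abs_of_nonneg (by linarith)
    rw [h10] at h7
    linarith
  · -- reverse
    intro haj
    have hub : ‖x + e j‖ ≤ 2 := by
      calc ‖x + e j‖ ≤ ‖x‖ + ‖e j‖ := norm_add_le _ _
        _ = 2 := by rw [hx, hejn]; norm_num
    have hlow : ∀ ε : ℝ, 0 < ε → 2 - ε ≤ ‖x + e j‖ := by
      intro ε hε
      obtain ⟨b, hbj, hb⟩ := key ε hε
      set u := b.sum fun i c => c • e i with hu
      have h1 : ‖u + e j‖ ≤ ‖x + e j‖ + ε := by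
        calc ‖u + e j‖ = ‖(x + e j) + (u - x)‖ := by congr 1; abel
          _ ≤ ‖x + e j‖ + ‖u - x‖ := norm_add_le _ _
          _ ≤ ‖x + e j‖ + ε := by rw [norm_sub_rev]; linarith
      have h2' : ‖u + e j‖ = tnorm θ S (b + Finsupp.single j 1) := by
        rw [← hemb b]; exact hX.norm_embed _
      have h3 : (2:ℝ) ≤ tnorm θ S (b + Finsupp.single j 1) := by
        have h4 := abs_le_tnorm θ hθ0' hθ1 S (b + Finsupp.single j 1) j
        rw [Finsupp.add_apply, Finsupp.single_eq_same, hbj, haj] at h4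
        have : |(1:ℝ) + 1| = 2 := by norm_num
        linarith [this ▸ h4]
      linarith [h2' ▸ h1]
    have : 2 ≤ ‖x + e j‖ := by
      by_contra hc
      push_neg at hc
      have := hlow ((2 - ‖x + e j‖)/2) (by linarith)
      linarith
    linarith
end
end
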